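/- Let A = (Q, Σ, {M_a}, α) be a finite probabilistic table, w ∈ Σ^ω an infinite word, and (J^0, J^1, ..., J^c) a partition of Q^ω into jets having the absorption property. Then for every i ∈ {1,...,c}, either μ_n^w(J^i_n) → 0 as n → ∞, or there exist λ_i > 0 and N ∈ ℕ such that μ_n^w(J^i_n) > λ_i for all n ≥ N. -/

import Mathlib

open Filter Topology MeasureTheory

namespace PAut

/-- A finite probabilistic table: row-stochastic matrices indexed by letters,
together with an initial distribution. -/
structure FPT (Q : Type*) (A : Type*) [Fintype Q] where
  M : A → Q → Q → ℝ
  M_nonneg : ∀ a q q', 0 ≤ M a q q'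
  M_row : ∀ a q, ∑ q', M a q q' = 1
  init : Q → ℝ
  init_nonneg : ∀ q, 0 ≤ init q
  init_sum : ∑ q, init q = 1

variable {Q A : Type*} [Fintype Q] [DecidableEq Q]

/-- `β` is a probability distribution on `Q`. -/
def IsDist (β : Q → ℝ) : Prop := (∀ q, 0 ≤ β q) ∧ ∑ q, β q = 1

/-- The matrix `M_ρ` of a finite word `ρ`. -/
def Mword (T : FPT Q A) : List A → Q → Q → ℝ
  | [], q, q' => if q = q' then 1 else 0
  | a :: ρ, q, q' => ∑ x, T.M a q x * Mword T ρ x q'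

/-- `δ(β,ρ)`: the distribution after reading `ρ` from initial distribution `β`. -/
def delta (T : FPT Q A) (β : Q → ℝ) (ρ : List A) : Q → ℝ :=
  fun q => ∑ q', β q' * Mword T ρ q' q

/-- Support of a distribution. -/
def supp (β : Q → ℝ) : Set Q := {q | β q ≠ 0}

/-- `H·ρ` : states reachable with positive probability from `H` reading `ρ`. -/
def act (T : FPT Q A) (H : Set Q) (ρ : List A) : Set Q :=
  {q | ∃ q' ∈ H, 0 < Mword T ρ q' q}

/-- One step of the homogeneous chain induced on `S` by the word `ρ`. -/
def stepRel (T : FPT Q A) (S : Set Q) (ρ : List A) (x y : Q) : Prop :=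
  x ∈ S ∧ y ∈ S ∧ 0 < Mword T ρ x y

/-- `S·ρ^#` : the recurrent states of the homogeneous chain induced on `S` by `ρ`. -/
def hashSet (T : FPT Q A) (S : Set Q) (ρ : List A) : Set Q :=
  {s | s ∈ S ∧ ∀ t, Relation.ReflTransGen (stepRel T S ρ) s t →
        Relation.ReflTransGen (stepRel T S ρ) t s}

/-- `(S,ρ)` is a `#`-reduction. -/
def IsHashReduction (T : FPT Q A) (S : Set Q) (ρ : List A) : Prop :=
  act T S ρ = S ∧ hashSet T S ρ ≠ S

/-- The execution tree `(β,ρ)` (finite word) is chain recurrent. -/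
def ChainRecFin (T : FPT Q A) (β : Q → ℝ) (ρ : List A) : Prop :=
  ∀ ρ₁ ρ₂ : List A, (ρ₁ ++ ρ₂) <+: ρ →
    ¬ IsHashReduction T (supp (delta T β ρ₁)) ρ₂

/-- `l` is a prefix of the infinite word `w`. -/
def PrefixOf (l : List A) (w : ℕ → A) : Prop :=
  ∀ (i : ℕ) (h : i < l.length), l.get ⟨i, h⟩ = w i

/-- The execution tree `(β,w)` (infinite word) is chain recurrent. -/
def ChainRecInf (T : FPT Q A) (β : Q → ℝ) (w : ℕ → A) : Prop :=
  ∀ ρ₁ ρ₂ : List A, PrefixOf (ρ₁ ++ ρ₂) w →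
    ¬ IsHashReduction T (supp (delta T β ρ₁)) ρ₂

/-- `w[1..n]` : the prefix of length `n` of the infinite word `w`. -/
def wordPrefix (w : ℕ → A) (n : ℕ) : List A := (List.range n).map w

/-- `w[n₁+1..n₂]` : the letters of `w` read between time `n₁` and time `n₂`. -/
def wordSegment (w : ℕ → A) (n₁ n₂ : ℕ) : List A :=
  (List.range (n₂ - n₁)).map fun j => w (n₁ + j)

/-- `μ_n^w = δ(α, w[1..n])` : the induced process on `Q`. -/
def muDist (T : FPT Q A) (w : ℕ → A) (n : ℕ) : Q → ℝ :=
  delta T T.init (wordPrefix w n)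

/-- A process `μ` on `Q` is simple: a partition `(Aₙ, Aₙᶜ)` of `Q`,
with mass `> λ` on each point of `Aₙ` and total mass of `Aₙᶜ` going to `0`. -/
def SimpleProcess (μ : ℕ → Q → ℝ) : Prop :=
  ∃ lam : ℝ, 0 < lam ∧ ∃ Aset : ℕ → Finset Q,
    (∀ n, ∀ q ∈ Aset n, lam < μ n q) ∧
    Tendsto (fun n => ∑ q ∈ (Aset n)ᶜ, μ n q) atTop (𝓝 0)

open Classical in
/-- `β(F)` : the mass a distribution gives to a set of states. -/
noncomputable def massOn (β : Q → ℝ) (F : Set Q) : ℝ :=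
  ∑ q : Q, if q ∈ F then β q else 0

open Classical in
/-- The uniform distribution on a set of states. -/
noncomputable def unif (D : Set Q) : Q → ℝ :=
  fun q => if q ∈ D then 1 / (Nat.card D : ℝ) else 0

/-- The Dirac distribution at a state. -/
def dirac (q : Q) : Q → ℝ := fun q' => if q' = q then 1 else 0

/-- `ε(A)` : the smallest nonzero transition probability of the automaton. -/
noncomputable def minProb (T : FPT Q A) : ℝ :=
  sInf {x : ℝ | 0 < x ∧ ∃ a q q', T.M a q q' = x}

/-! ### Linked graphs -/

/-- Left endpoints of a bipartite graph. -/
def lgA (G : Set (Q × Q)) : Set Q := Prod.fst '' G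

/-- Right endpoints of a bipartite graph. -/
def lgB (G : Set (Q × Q)) : Set Q := Prod.snd '' G

/-- The linking condition for a sequence of bipartite graphs. -/
def IsLinked (l : List (Set (Q × Q))) : Prop :=
  List.Chain' (fun G H => lgB G = lgA H) l

/-- Origin of a linked graph. -/
def lgOrg : List (Set (Q × Q)) → Set Q
  | [] => ∅
  | G :: _ => lgA G

/-- Destination of a linked graph. -/
def lgDest : List (Set (Q × Q)) → Set Q
  | [] => ∅
  | [G] => lgB G
  | _ :: G :: l => lgDest (G :: l)

/-- Destination, with a default value for the empty linked graph. -/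
def lgDestD (S : Set Q) : List (Set (Q × Q)) → Set Q
  | [] => S
  | l => lgDest l

/-- Compaction of a linked graph, as a relation on `Q`. -/
def compRel : List (Set (Q × Q)) → Set (Q × Q)
  | [] => {p | p.1 = p.2}
  | [G] => G
  | G :: H :: l => {p | ∃ t, (p.1, t) ∈ G ∧ (t, p.2) ∈ compRel (H :: l)}

/-- Reachability in a graph given as a set of edges. -/
def grReach (C : Set (Q × Q)) (s t : Q) : Prop :=
  Relation.ReflTransGen (fun a b => (a, b) ∈ C) s t

/-- `Rec(I)` : the recurrent states of the compaction of a linked graph. -/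
def recSet (l : List (Set (Q × Q))) : Set Q :=
  {s | s ∈ lgOrg l ∧ ∀ t, grReach (compRel l) s t → grReach (compRel l) t s}

/-- `Rec(s,I)` : the recurrent states reachable from `s` in the compaction. -/
def recFrom (s : Q) (l : List (Set (Q × Q))) : Set Q :=
  {t | t ∈ recSet l ∧ grReach (compRel l) s t}

/-- Restrict each graph of a linked graph to the sources reachable from `S`. -/
def restrictFrom (S : Set Q) : List (Set (Q × Q)) → List (Set (Q × Q))
  | [] => []
  | G :: l => ({p | p ∈ G ∧ p.1 ∈ S} : Set (Q × Q)) ::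
      restrictFrom (lgB ({p | p ∈ G ∧ p.1 ∈ S} : Set (Q × Q))) l

/-- `(i₁,i₂)` (0-indexed) is a border of the linked graph `l`. -/
def IsBorder (l : List (Set (Q × Q))) (i₁ i₂ : ℕ) : Prop :=
  i₁ < i₂ ∧ i₂ < l.length ∧ lgB (l.getD i₂ ∅) ⊆ lgA (l.getD i₁ ∅)

/-- The action of a border `(i₁,i₂)` (0-indexed) on a linked graph. -/
def borderAct (l : List (Set (Q × Q))) (i₁ i₂ : ℕ) : List (Set (Q × Q)) :=
  let p := i₁ - 1
  let seg := (l.drop i₁).take (i₂ + 1 - i₁)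
  let pre := l.take p
  let S := lgDestD (lgOrg l) pre
  let Gspec : Set (Q × Q) := {pr | pr.1 ∈ S ∧ pr.2 ∈ recFrom pr.1 seg}
  pre ++ Gspec :: restrictFrom (lgB Gspec) (l.drop (p + 1))

/-- Action of a chain of borders on a linked graph. -/
def borderChainAct : List (ℕ × ℕ) → List (Set (Q × Q)) → List (Set (Q × Q))
  | [], l => l
  | b :: bs, l => borderChainAct bs (borderAct l b.1 b.2)

/-- `B` is a chain of borders on the linked graph `l`. -/
def IsBorderChain : List (ℕ × ℕ) → List (Set (Q × Q)) → Prop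
  | [], _ => True
  | b :: bs, l => IsBorder l b.1 b.2 ∧ IsBorderChain bs (borderAct l b.1 b.2)

/-- `LG(ρ, S, T)` : the linked graph induced by reading `ρ` from `S`. -/
def lgOf (T : FPT Q A) (S : Set Q) : List A → List (Set (Q × Q))
  | [] => []
  | a :: ρ => ({p | p.1 ∈ S ∧ 0 < T.M a p.1 p.2} : Set (Q × Q)) ::
      lgOf T (lgB ({p | p.1 ∈ S ∧ 0 < T.M a p.1 p.2} : Set (Q × Q))) ρ

/-- `C →^{#-ρ} D`. -/
def HashRho (T : FPT Q A) (ρ : List A) (C D : Set Q) : Prop :=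
  ∃ B : List (ℕ × ℕ), IsBorderChain B (lgOf T C ρ) ∧
    lgDestD C (borderChainAct B (lgOf T C ρ)) = D

/-- `C →^{#} D`. -/
def Hash (T : FPT Q A) (C D : Set Q) : Prop := ∃ ρ : List A, HashRho T ρ C D

/-- Structurally simple probabilistic automaton. -/
def StructSimple (T : FPT Q A) : Prop :=
  ∀ (ρ : List A) (C D : Set Q),
    D ⊆ C → HashRho T ρ C D →
    (∀ D' : Set Q, HashRho T ρ C D' → D' ⊆ D → D' = D) →
    ChainRecFin T (unif D) ρ

/-- `C →^{#-ρ-I} D`. -/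
def HashIRho (T : FPT Q A) (ρ : List A) (C : Set Q) (I : Set (Q × Q)) (D : Set Q) : Prop :=
  ∃ B : List (ℕ × ℕ), IsBorderChain B (lgOf T C ρ) ∧
    ∃ i : ℕ, 1 ≤ i ∧ i ≤ ρ.length ∧
      compRel ((borderChainAct B (lgOf T C ρ)).take i) = I ∧
      lgDest ((borderChainAct B (lgOf T C ρ)).take i) = D

/-- Edge of the extended support graph. -/
def ESGEdge (T : FPT Q A) (C D : Set Q) : Prop :=
  ∃ (I : Set (Q × Q)) (ρ : List A), HashIRho T ρ C I D

/-- Reachability in the extended support graph. -/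
def ESGReach (T : FPT Q A) : Set Q → Set Q → Prop :=
  Relation.ReflTransGen (ESGEdge T)

/-- A subsequence of recurrent execution trees of the execution tree `(β, w)`. -/
structure RecSeqOf (T : FPT Q A) (β : Q → ℝ) (w : ℕ → A) where
  k : ℕ
  βs : Fin (k + 1) → Q → ℝ
  ρs : Fin k → List A
  ρ's : Fin k → List A
  wlast : ℕ → A
  dists : ∀ i, IsDist (βs i)
  first_eq : βs 0 = β
  supp_sub : ∀ i : Fin k,
    supp (βs i.succ) ⊆ supp (delta T (βs i.castSucc) (ρs i ++ ρ's i))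
  chainrec : ∀ i : Fin k, ChainRecFin T (βs i.castSucc) (ρs i)
  chainrec_last : ChainRecInf T (βs (Fin.last k)) wlast
  decomp_prefix : PrefixOf ((List.ofFn fun i : Fin k => ρs i ++ ρ's i).flatten) w
  decomp_tail : ∀ n : ℕ,
    w (((List.ofFn fun i : Fin k => ρs i ++ ρ's i).flatten).length + n) = wlast n

/-- The length of a sequence of recurrent execution trees. -/
def RecSeqOf.len {T : FPT Q A} {β : Q → ℝ} {w : ℕ → A} (r : RecSeqOf T β w) : ℕ :=
  ∑ i, (r.ρ's i).length

/-- `w` is a lasso shape word `ρ₁ · ρ₂^ω` with `ρ₂` nonempty. -/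
def IsLasso (w : ℕ → A) : Prop :=
  ∃ ρ₁ ρ₂ : List A, ρ₂ ≠ [] ∧
    (∀ n : ℕ, n < ρ₁.length → ρ₁[n]? = some (w n)) ∧
    (∀ n : ℕ, ρ₁.length ≤ n → ρ₂[(n - ρ₁.length) % ρ₂.length]? = some (w n))

/-- The periodic word `ρ^ω`. -/
def periodicWord (ρ : List A) (h : ρ ≠ []) : ℕ → A :=
  fun n => ρ.get ⟨n % ρ.length, Nat.mod_lt n (List.length_pos_of_ne_nil h)⟩

/-- States visited infinitely often by a run. -/
def infOcc (r : ℕ → Q) : Set Q := {q | ∀ N : ℕ, ∃ n, N ≤ n ∧ r n = q}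

/-- The parity acceptance condition for a priority function `p`. -/
def parityEvent (p : Q → ℕ) : Set (ℕ → Q) := {r | Even (sInf (p '' infOcc r))}

/-! ### The induced measure on runs -/

/-- Probability of a cylinder of length `n+1` for the chain started in `β` reading `w`. -/
def cylProb (T : FPT Q A) (β : Q → ℝ) (w : ℕ → A) (n : ℕ) (f : Fin (n + 1) → Q) : ℝ :=
  β (f 0) * ∏ i : Fin n, T.M (w i) (f i.castSucc) (f i.succ)

/-- `μ` is the probability measure `P^w` induced on runs by the chain started
in `β` reading `w`. -/
def IsMarkovMeasure [MeasurableSpace Q] (T : FPT Q A) (β : Q → ℝ) (w : ℕ → A)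
    (μ : Measure (ℕ → Q)) : Prop :=
  IsProbabilityMeasure μ ∧
    ∀ (n : ℕ) (f : Fin (n + 1) → Q),
      μ {r | ∀ i : Fin (n + 1), r i = f i} = ENNReal.ofReal (cylProb T β w n f)

/-- `F_n` : the σ-field generated by the coordinates `X_m`, `m ≥ n`. -/
def futureField (Q : Type*) [m : MeasurableSpace Q] (n : ℕ) : MeasurableSpace (ℕ → Q) :=
  ⨆ k, ⨆ _ : n ≤ k, MeasurableSpace.comap (fun r : ℕ → Q => r k) m

/-- `F_∞` : the tail σ-field. -/
def tailField (Q : Type*) [MeasurableSpace Q] : MeasurableSpace (ℕ → Q) :=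
  ⨅ n : ℕ, futureField Q n

/-- `Γ` is an atomic event of the σ-field `m` for the measure `μ`. -/
def IsAtomIn {Q : Type*} [MeasurableSpace Q] (μ : Measure (ℕ → Q))
    (m : MeasurableSpace (ℕ → Q)) (Γ : Set (ℕ → Q)) : Prop :=
  0 < μ Γ ∧ ∀ Γ' : Set (ℕ → Q), MeasurableSet[m] Γ' → Γ' ⊆ Γ → μ Γ' = 0 ∨ μ Γ' = μ Γ

/-- `τ^i_∞` : runs that eventually stay in the jet `J^i`. -/
def tauInf {Q : Type*} {c : ℕ} (J : Fin (c + 1) → ℕ → Set Q) (i : Fin (c + 1)) :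
    Set (ℕ → Q) :=
  {r | ∃ N : ℕ, ∀ n, N ≤ n → r n ∈ J i n}

/-- `(J^0,...,J^c)` is a partition of `Q^ω` into jets. -/
def JetPartition {Q : Type*} {c : ℕ} (J : Fin (c + 1) → ℕ → Set Q) : Prop :=
  ∀ (n : ℕ) (q : Q), ∃! i : Fin (c + 1), q ∈ J i n

/-- Absorption: almost every run eventually enters one of the jets `J^i`, `i ≥ 1`,
and stays there forever. -/
def Absorbing {Q : Type*} [MeasurableSpace Q] {c : ℕ} (μ : Measure (ℕ → Q))
    (J : Fin (c + 1) → ℕ → Set Q) : Prop :=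
  μ {r | ∃ i : Fin (c + 1), i ≠ 0 ∧ ∃ N : ℕ, ∀ n, N ≤ n → r n ∈ J i n} = 1

/-- Conditional probability `μ(E | F)`. -/
noncomputable def condProb {Q : Type*} [MeasurableSpace Q] (μ : Measure (ℕ → Q))
    (E F : Set (ℕ → Q)) : ℝ :=
  (μ (E ∩ F)).toReal / (μ F).toReal

/-- The jet `J` is mixing for the measure `μ`. -/
def MixingJet {Q : Type*} [MeasurableSpace Q] (μ : Measure (ℕ → Q)) (J : ℕ → Set Q) :
    Prop :=
  ∀ q q' : Q, ∀ qs : ℕ → Q, (∀ n, qs n ∈ J n) → ∀ m : ℕ,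
    (∃ L : ℝ, 0 < L ∧
      Tendsto (fun n => condProb μ {r | r n = qs n} {r | r m = q}) atTop (𝓝 L)) →
    (∃ L : ℝ, 0 < L ∧
      Tendsto (fun n => condProb μ {r | r n = qs n} {r | r m = q'}) atTop (𝓝 L)) →
    Tendsto (fun n =>
        condProb μ {r | r n = qs n} ({r | r n ∈ J n} ∩ {r | r m = q}) /
        condProb μ {r | r n = qs n} ({r | r n ∈ J n} ∩ {r | r m = q'}))
      atTop (𝓝 1)

end PAut

namespace PAut

/-!
`μ_n^w(J^i_n)` is the probability that `X_n ∈ J^i_n`. Since the jets partition `Q` at every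
time and almost every run is eventually trapped in a single jet, the events `{X_n ∈ J^i_n}`
converge almost surely to the event `τ^i_∞` that the run is eventually trapped in `J^i`. By
dominated convergence `μ_n^w(J^i_n) → P^w(τ^i_∞)`, and a limit that is not `0` is positive, so
the masses eventually stay above half of it.
-/

section MarkovChain

variable {Q A : Type*} [Fintype Q]

lemma massOn_nonneg {β : Q → ℝ} (hβ : ∀ q, 0 ≤ β q) (F : Set Q) : 0 ≤ massOn β F :=
  Finset.sum_nonneg fun q _ => by split_ifs <;> simp [hβ q]

lemma cylProb_nonneg {T : FPT Q A} {β : Q → ℝ} (hβ : ∀ q, 0 ≤ β q) (w : ℕ → A) (n : ℕ)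
    (f : Fin (n + 1) → Q) : 0 ≤ cylProb T β w n f :=
  mul_nonneg (hβ _) (Finset.prod_nonneg fun _ _ => T.M_nonneg _ _ _)

lemma cylProb_snoc (T : FPT Q A) (β : Q → ℝ) (w : ℕ → A) (n : ℕ) (f : Fin (n + 1) → Q)
    (q : Q) :
    cylProb T β w (n + 1) (Fin.snoc f q) = cylProb T β w n f * T.M (w n) (f (Fin.last n)) q := by
  simp only [cylProb, Fin.prod_univ_castSucc, Fin.succ_castSucc, Fin.snoc_castSucc,
    Fin.succ_last, Fin.snoc_last, Fin.val_castSucc, Fin.val_last]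
  simp [mul_assoc]

variable [DecidableEq Q]

lemma Mword_nonneg (T : FPT Q A) (ρ : List A) (q q' : Q) : 0 ≤ Mword T ρ q q' := by
  induction ρ generalizing q with
  | nil => unfold Mword; positivity
  | cons a ρ ih => exact Finset.sum_nonneg fun x _ => mul_nonneg (T.M_nonneg a q x) (ih x)

lemma delta_nonneg (T : FPT Q A) {β : Q → ℝ} (hβ : ∀ q, 0 ≤ β q) (ρ : List A) (q : Q) :
    0 ≤ delta T β ρ q :=
  Finset.sum_nonneg fun x _ => mul_nonneg (hβ x) (Mword_nonneg T ρ x q)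

lemma Mword_append (T : FPT Q A) (ρ σ : List A) (q q' : Q) :
    Mword T (ρ ++ σ) q q' = ∑ x, Mword T ρ q x * Mword T σ x q' := by
  induction ρ generalizing q with
  | nil => simp [Mword]
  | cons a ρ ih =>
    simp only [List.cons_append, Mword, ih, Finset.mul_sum, Finset.sum_mul]
    rw [Finset.sum_comm]
    simp only [mul_assoc]

lemma Mword_singleton (T : FPT Q A) (a : A) (q q' : Q) : Mword T [a] q q' = T.M a q q' := by
  simp [Mword]

lemma delta_nil (T : FPT Q A) (β : Q → ℝ) : delta T β [] = β := by
  ext q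
  simp [delta, Mword]

lemma delta_append_singleton (T : FPT Q A) (β : Q → ℝ) (ρ : List A) (a : A) (q : Q) :
    delta T β (ρ ++ [a]) q = ∑ x, delta T β ρ x * T.M a x q := by
  simp only [delta, Mword_append, Mword_singleton, Finset.mul_sum, Finset.sum_mul]
  rw [Finset.sum_comm]
  simp only [mul_assoc]

lemma wordPrefix_succ (w : ℕ → A) (n : ℕ) :
    wordPrefix w (n + 1) = wordPrefix w n ++ [w n] := by
  simp [wordPrefix, List.range_succ]

-- Stated for an arbitrary endpoint weight `h`, so that the induction on `n` goes through.
lemma sum_cylProb_mul (T : FPT Q A) (β : Q → ℝ) (w : ℕ → A) (n : ℕ) (h : Q → ℝ) :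
    ∑ f : Fin (n + 1) → Q, cylProb T β w n f * h (f (Fin.last n)) =
      ∑ q, delta T β (wordPrefix w n) q * h q := by
  induction n generalizing h with
  | zero =>
    rw [← (Equiv.funUnique (Fin 1) Q).symm.sum_comp]
    simp [cylProb, wordPrefix, delta_nil]
  | succ n ih =>
    rw [← (Fin.snocEquiv fun _ => Q).sum_comp, Fintype.sum_prod_type_right]
    simp only [Fin.snocEquiv, Equiv.coe_fn_mk, cylProb_snoc, Fin.snoc_last, mul_assoc,
      ← Finset.mul_sum]
    rw [ih fun x => ∑ y, T.M (w n) x y * h y, wordPrefix_succ]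
    simp only [delta_append_singleton, Finset.mul_sum, Finset.sum_mul, mul_assoc]
    exact Finset.sum_comm

variable [MeasurableSpace Q] [MeasurableSingletonClass Q]

lemma IsMarkovMeasure.measure_apply_mem {T : FPT Q A} {β : Q → ℝ} {w : ℕ → A}
    {μ : Measure (ℕ → Q)} (hμ : IsMarkovMeasure T β w μ) (hβ : ∀ q, 0 ≤ β q) (n : ℕ)
    (F : Set Q) : μ {r | r n ∈ F} = ENNReal.ofReal (massOn (delta T β (wordPrefix w n)) F) := by
  classical
  have hcyl : {r : ℕ → Q | r n ∈ F} =
      ⋃ f ∈ Finset.univ.filter (fun f : Fin (n + 1) → Q => f (Fin.last n) ∈ F),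
        {r | ∀ i : Fin (n + 1), r i = f i} := by
    ext r
    simp only [Set.mem_ofPred_eq, Set.mem_iUnion, Finset.mem_filter, Finset.mem_univ, true_and]
    refine ⟨fun hr => ⟨fun i => r i, hr, fun i => rfl⟩, ?_⟩
    rintro ⟨f, hf, hrf⟩
    rwa [show r n = f (Fin.last n) from hrf (Fin.last n)]
  rw [hcyl, measure_biUnion_finset, Finset.sum_congr rfl fun f _ => hμ.2 n f,
    ← ENNReal.ofReal_sum_of_nonneg fun f _ => cylProb_nonneg hβ w n f]
  · congr 1
    have hsum := sum_cylProb_mul T β w n fun q => if q ∈ F then 1 else 0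
    simp only [mul_ite, mul_one, mul_zero] at hsum
    rw [Finset.sum_filter, hsum, massOn]
  · intro f _ g _ hfg
    exact Set.disjoint_left.2 fun r hrf hrg => hfg (funext fun i => (hrf i).symm.trans (hrg i))
  · intro f _
    measurability

end MarkovChain

section Jets

variable {Q : Type*} {c : ℕ} {J : Fin (c + 1) → ℕ → Set Q}

lemma JetPartition.eventually_mem_iff_mem_tauInf (hJ : JetPartition J) {r : ℕ → Q}
    {j : Fin (c + 1)} (hr : r ∈ tauInf J j) (i : Fin (c + 1)) :
    ∀ᶠ n in atTop, r n ∈ J i n ↔ r ∈ tauInf J i := by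
  obtain ⟨N, hN⟩ := hr
  rw [eventually_atTop]
  refine ⟨N, fun n hn => ?_⟩
  by_cases hij : i = j
  · subst hij
    exact iff_of_true (hN n hn) ⟨N, hN⟩
  · refine iff_of_false (fun h => hij ((hJ n (r n)).unique h (hN n hn))) ?_
    rintro ⟨M, hM⟩
    exact hij ((hJ (max M N) _).unique (hM _ (le_max_left M N)) (hN _ (le_max_right M N)))

variable [MeasurableSpace Q] [MeasurableSingletonClass Q] [Finite Q]

lemma measurableSet_tauInf (J : Fin (c + 1) → ℕ → Set Q) (i : Fin (c + 1)) :
    MeasurableSet (tauInf J i) := by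
  have htau : tauInf J i = ⋃ N, ⋂ n, ⋂ (_ : N ≤ n), (fun r : ℕ → Q => r n) ⁻¹' J i n := by
    ext r
    simp [tauInf]
  rw [htau]
  exact .iUnion fun N => .iInter fun n => .iInter fun _ =>
    measurable_pi_apply n (J i n).toFinite.measurableSet

lemma Absorbing.ae_exists_mem_tauInf {μ : Measure (ℕ → Q)} [IsProbabilityMeasure μ]
    (habs : Absorbing μ J) : ∀ᵐ r ∂μ, ∃ j, r ∈ tauInf J j := by
  have hS : {r : ℕ → Q | ∃ j, j ≠ 0 ∧ r ∈ tauInf J j} = ⋃ j, ⋃ (_ : j ≠ 0), tauInf J j := by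
    ext r
    simp
  have hae : ∀ᵐ r ∂μ, ∃ j, j ≠ 0 ∧ r ∈ tauInf J j := by
    refine (prob_compl_eq_zero_iff ?_).2 habs
    rw [hS]
    exact .iUnion fun j => .iUnion fun _ => measurableSet_tauInf J j
  exact hae.mono fun r ⟨j, _, hj⟩ => ⟨j, hj⟩

end Jets

lemma tendsto_nhds_zero_or_eventually_gt {u : ℕ → ℝ} {L : ℝ} (hu : Tendsto u atTop (𝓝 L))
    (hL : 0 ≤ L) :
    Tendsto u atTop (𝓝 0) ∨ ∃ lam : ℝ, 0 < lam ∧ ∃ N : ℕ, ∀ n, N ≤ n → lam < u n := by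
  rcases hL.eq_or_lt with rfl | hpos
  · exact .inl hu
  · exact .inr ⟨L / 2, half_pos hpos,
      eventually_atTop.1 (hu.eventually (lt_mem_nhds (half_lt_self hpos)))⟩

theorem stmt2 {Q A : Type*} [Fintype Q] [DecidableEq Q]
    [MeasurableSpace Q] [MeasurableSingletonClass Q]
    (T : FPT Q A) (w : ℕ → A) (μ : Measure (ℕ → Q))
    (hμ : IsMarkovMeasure T T.init w μ)
    (c : ℕ) (J : Fin (c + 1) → ℕ → Set Q)
    (hpart : JetPartition J)
    (habs : Absorbing μ J) :
    ∀ i : Fin (c + 1), i ≠ 0 →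
      Tendsto (fun n => massOn (muDist T w n) (J i n)) atTop (𝓝 (0 : ℝ)) ∨
      ∃ lam : ℝ, 0 < lam ∧ ∃ N : ℕ, ∀ n, N ≤ n →
        lam < massOn (muDist T w n) (J i n) := by
  intro i _
  have := hμ.1
  have hmass (n : ℕ) :
      massOn (muDist T w n) (J i n) = (μ {r | r n ∈ J i n}).toReal := by
    rw [hμ.measure_apply_mem T.init_nonneg, ENNReal.toReal_ofReal
      (massOn_nonneg (delta_nonneg T T.init_nonneg _) _)]
    rfl
  have hlim : Tendsto (fun n => μ {r | r n ∈ J i n}) atTop (𝓝 (μ (tauInf J i))) :=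
    tendsto_measure_of_ae_tendsto_indicator_of_isFiniteMeasure atTop (measurableSet_tauInf J i)
      (fun n => measurable_pi_apply n (J i n).toFinite.measurableSet)
      (habs.ae_exists_mem_tauInf.mono fun r ⟨_, hj⟩ => hpart.eventually_mem_iff_mem_tauInf hj i)
  refine tendsto_nhds_zero_or_eventually_gt ?_ (ENNReal.toReal_nonneg (a := μ (tauInf J i)))
  rw [funext hmass]
  exact (ENNReal.tendsto_toReal (measure_ne_top μ _)).comp hlim

end PAut
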